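/- arXiv:math/0406279 — 3 statements merged into one kernel-verified Lean document; each statement's English description precedes it below -/
import Mathlib

section
/- Let A be an (n+1)×(n+1) (0,1)-matrix with zero permanent. Suppose the intersection of all maximal admissible colorings of A is the singleton {k} (i.e., the maximal canonical coloring of A is {k}). Then {k} is the unique admissible coloring of A. -/
/-- For an `(n+1) × (n+1)` (0,1)-matrix `A` (identified with a predicate
`A : Fin (n+1) → Fin (n+1) → Prop`, where `A i j` holds iff the `(i,j)` entry is `1`),
a nonempty subset `J ⊆ {0, …, n}` is an *admissible coloring* for `A` if there is a
nonempty subset `I ⊆ {0, …, n}` with `|I| + |J| = n + 2` such that the `(i,j)` entry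
of `A` is `0` for all `i ∈ I`, `j ∈ J`. -/
def IsAdmissible {n : ℕ} (A : Fin (n + 1) → Fin (n + 1) → Prop)
    (J : Finset (Fin (n + 1))) : Prop :=
  J.Nonempty ∧ ∃ I : Finset (Fin (n + 1)), I.Nonempty ∧ I.card + J.card = n + 2 ∧
    ∀ i ∈ I, ∀ j ∈ J, ¬ A i j

/-- `J` is a maximal (w.r.t. inclusion) admissible coloring for `A`. -/
def IsMaximalColoring {n : ℕ} (A : Fin (n + 1) → Fin (n + 1) → Prop)
    (J : Finset (Fin (n + 1))) : Prop :=
  IsAdmissible A J ∧ ∀ J' : Finset (Fin (n + 1)), IsAdmissible A J' → J ⊆ J' → J' = J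

/-!
In the bipartite graph of `A`, a coloring `J` is admissible exactly when its set of
neighbouring rows `N(J)` is smaller than `J`, i.e. when its deficiency `|J| - |N(J)|` is
positive, and by Hall's theorem a zero permanent forces such a coloring. The deficiency is
supermodular, so if `K ⊄ M` for a maximal coloring `M`, then `K ∪ M` is not admissible and
`K ∩ M` has strictly larger deficiency than `K`. Two distinct maximal colorings therefore
meet in a set of deficiency at least `2`, and shrinking it against every maximal coloring
keeps the deficiency at least `2` and ends inside the canonical coloring, which then has at
least two elements. So when the canonical coloring is `{k}` there is a single maximal
coloring, which must be `{k}`, and every admissible coloring lies in it.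
-/

open Finset Classical

section Deficiency

variable {α β : Type*} [Fintype α] [DecidableEq α]

noncomputable def neighborRows (A : α → β → Prop) (J : Finset β) : Finset α :=
  J.biUnion fun j => univ.filter (A · j)

noncomputable def deficiency (A : α → β → Prop) (J : Finset β) : ℤ :=
  #J - #(neighborRows A J)

variable {A : α → β → Prop}

lemma mem_neighborRows {J : Finset β} {i : α} :
    i ∈ neighborRows A J ↔ ∃ j ∈ J, A i j := by
  simp [neighborRows]

lemma subset_compl_neighborRows_iff {I : Finset α} {J : Finset β} :
    I ⊆ (neighborRows A J)ᶜ ↔ ∀ i ∈ I, ∀ j ∈ J, ¬ A i j := by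
  simp [subset_iff, mem_neighborRows]

lemma deficiency_le_card (J : Finset β) : deficiency A J ≤ #J := by
  simp [deficiency]

lemma neighborRows_union [DecidableEq β] (J K : Finset β) :
    neighborRows A (J ∪ K) = neighborRows A J ∪ neighborRows A K :=
  union_biUnion

lemma neighborRows_inter_subset [DecidableEq β] (J K : Finset β) :
    neighborRows A (J ∩ K) ⊆ neighborRows A J ∩ neighborRows A K :=
  subset_inter (biUnion_subset_biUnion_of_subset_left _ inter_subset_left)
    (biUnion_subset_biUnion_of_subset_left _ inter_subset_right)

lemma deficiency_add_deficiency_le [DecidableEq β] (J K : Finset β) :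
    deficiency A J + deficiency A K ≤ deficiency A (J ∪ K) + deficiency A (J ∩ K) := by
  have hcols := card_union_add_card_inter J K
  have hrows := card_union_add_card_inter (neighborRows A J) (neighborRows A K)
  have hinter := card_le_card (neighborRows_inter_subset (A := A) J K)
  simp only [deficiency, neighborRows_union]
  omega

lemma exists_perm_of_forall_card_le_card_neighborRows {A : α → α → Prop}
    (hHall : ∀ J : Finset α, #J ≤ #(neighborRows A J)) :
    ∃ σ : Equiv.Perm α, ∀ i, A i (σ i) := by
  obtain ⟨f, hf, hfA⟩ :=
    (all_card_le_biUnion_card_iff_existsInjective' fun j => univ.filter (A · j)).mp hHall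
  let e := Equiv.ofBijective f (Finite.injective_iff_bijective.mp hf)
  refine ⟨e.symm, fun i => ?_⟩
  have := hfA (e.symm i)
  simp only [mem_filter, mem_univ, true_and] at this
  rwa [show f (e.symm i) = i from e.apply_symm_apply i] at this

end Deficiency

variable {n : ℕ} {A : Fin (n + 1) → Fin (n + 1) → Prop}

lemma isAdmissible_iff {J : Finset (Fin (n + 1))} :
    IsAdmissible A J ↔ J.Nonempty ∧ 0 < deficiency A J := by
  have hrows : #(neighborRows A J) + #(neighborRows A J)ᶜ = n + 1 := by
    rw [card_add_card_compl, Fintype.card_fin]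
  have hJ : #J ≤ n + 1 := by simpa using card_le_univ J
  simp only [IsAdmissible, deficiency, ← subset_compl_neighborRows_iff, and_congr_right_iff]
  refine fun _ => ⟨fun ⟨I, _, hI, hIN⟩ => ?_, fun hpos => ?_⟩
  · have := card_le_card hIN
    omega
  · obtain ⟨I, hIN, hI⟩ := exists_subset_card_eq (s := (neighborRows A J)ᶜ)
      (n := n + 2 - #J) (by omega)
    exact ⟨I, card_pos.mp (by omega), by omega, hIN⟩

lemma exists_isAdmissible (hperm : ∀ σ : Equiv.Perm (Fin (n + 1)), ∃ i, ¬ A i (σ i)) :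
    ∃ J, IsAdmissible A J := by
  by_contra! hnone
  obtain ⟨σ, hσ⟩ := exists_perm_of_forall_card_le_card_neighborRows (A := A) fun J => by
    rcases J.eq_empty_or_nonempty with rfl | hJ
    · simp
    · have := mt isAdmissible_iff.mpr (hnone J)
      simp only [hJ, true_and, not_lt, deficiency] at this
      omega
  obtain ⟨i, hi⟩ := hperm σ
  exact hi (hσ i)

lemma isMaximalColoring_iff_maximal {J : Finset (Fin (n + 1))} :
    IsMaximalColoring A J ↔ Maximal (IsAdmissible A) J :=
  and_congr_right fun _ => forall₂_congr fun _ _ =>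
    ⟨fun h hJ => (h hJ).le, fun h hJ => (h hJ).antisymm hJ⟩

lemma exists_isMaximalColoring_superset {J : Finset (Fin (n + 1))} (hJ : IsAdmissible A J) :
    ∃ M, IsMaximalColoring A M ∧ J ⊆ M := by
  obtain ⟨M, hJM, hM⟩ := Finite.exists_le_maximal hJ
  exact ⟨M, isMaximalColoring_iff_maximal.mpr hM, hJM⟩

lemma IsMaximalColoring.deficiency_lt_deficiency_inter {K M : Finset (Fin (n + 1))}
    (hM : IsMaximalColoring A M) (hKM : ¬ K ⊆ M) :
    deficiency A K < deficiency A (K ∩ M) := by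
  obtain ⟨hMne, hMpos⟩ := isAdmissible_iff.mp hM.1
  have hunion : ¬ IsAdmissible A (K ∪ M) := fun h =>
    hKM ((hM.2 _ h subset_union_right).symm ▸ subset_union_left)
  have hunion' : deficiency A (K ∪ M) ≤ 0 := by
    simpa [isAdmissible_iff, hMne.mono subset_union_right] using hunion
  linarith [deficiency_add_deficiency_le (A := A) K M]

noncomputable def canonicalColoring (A : Fin (n + 1) → Fin (n + 1) → Prop) :
    Finset (Fin (n + 1)) :=
  univ.filter fun x => ∀ M, IsMaximalColoring A M → x ∈ M

lemma subset_canonicalColoring_iff {K : Finset (Fin (n + 1))} :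
    K ⊆ canonicalColoring A ↔ ∀ M, IsMaximalColoring A M → K ⊆ M := by
  simp only [canonicalColoring, subset_iff, mem_filter, mem_univ, true_and]
  exact ⟨fun h M hM x hx => h hx M hM, fun h x hx M hM => h M hM hx⟩

lemma exists_subset_canonicalColoring_two_le_deficiency (K : Finset (Fin (n + 1)))
    (hK : 2 ≤ deficiency A K) :
    ∃ K' ⊆ canonicalColoring A, 2 ≤ deficiency A K' := by
  induction K using strongInduction with
  | H K ih =>
    by_cases hcan : K ⊆ canonicalColoring A
    · exact ⟨K, hcan, hK⟩
    · obtain ⟨M, hM, hKM⟩ := by simpa [subset_canonicalColoring_iff] using hcan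
      exact ih (K ∩ M) (inf_lt_left.mpr hKM)
        (hK.trans (hM.deficiency_lt_deficiency_inter hKM).le)

lemma two_le_card_canonicalColoring {K : Finset (Fin (n + 1))} (hK : 2 ≤ deficiency A K) :
    2 ≤ #(canonicalColoring A) := by
  obtain ⟨K', hK'can, hK'⟩ := exists_subset_canonicalColoring_two_le_deficiency K hK
  have := card_le_card hK'can
  have := deficiency_le_card (A := A) K'
  omega

lemma IsMaximalColoring.eq_of_card_canonicalColoring_le_one {M M' : Finset (Fin (n + 1))}
    (hcan : #(canonicalColoring A) ≤ 1) (hM : IsMaximalColoring A M)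
    (hM' : IsMaximalColoring A M') : M = M' := by
  by_contra hne
  have hMM' : ¬ M ⊆ M' := fun h => hne (hM.2 M' hM'.1 h).symm
  have hpos := (isAdmissible_iff.mp hM.1).2
  have := two_le_card_canonicalColoring
    (by linarith [hM'.deficiency_lt_deficiency_inter hMM'] : 2 ≤ deficiency A (M ∩ M'))
  omega

lemma canonicalColoring_eq_of_forall_eq {M : Finset (Fin (n + 1))}
    (hM : IsMaximalColoring A M) (huniq : ∀ M', IsMaximalColoring A M' → M' = M) :
    canonicalColoring A = M := by
  ext x
  simp only [canonicalColoring, mem_filter, mem_univ, true_and]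
  exact ⟨fun h => h M hM, fun hx M' hM' => huniq M' hM' ▸ hx⟩

/-- Let `A` be an `(n+1) × (n+1)` (0,1)-matrix with zero permanent. If the intersection
of all maximal admissible colorings of `A` (the maximal canonical coloring of `A`) is
the singleton `{k}`, then `{k}` is the unique admissible coloring of `A`. -/
theorem single_canonical_color_unique {n : ℕ} (A : Fin (n + 1) → Fin (n + 1) → Prop)
    (hperm : ∀ σ : Equiv.Perm (Fin (n + 1)), ∃ i : Fin (n + 1), ¬ A i (σ i))
    (k : Fin (n + 1))
    (hk : ∀ x : Fin (n + 1),
      (∀ J : Finset (Fin (n + 1)), IsMaximalColoring A J → x ∈ J) ↔ x = k) :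
    IsAdmissible A {k} ∧ ∀ J : Finset (Fin (n + 1)), IsAdmissible A J → J = {k} := by
  have hcan : canonicalColoring A = {k} := by
    ext x
    simp [canonicalColoring, hk]
  obtain ⟨J₀, hJ₀⟩ := exists_isAdmissible hperm
  obtain ⟨M, hM, -⟩ := exists_isMaximalColoring_superset hJ₀
  have huniq : ∀ M', IsMaximalColoring A M' → M' = M := fun M' hM' =>
    hM'.eq_of_card_canonicalColoring_le_one (by simp [hcan]) hM
  have hMk : M = {k} := (canonicalColoring_eq_of_forall_eq hM huniq).symm.trans hcan
  refine ⟨hMk ▸ hM.1, fun J hJ => ?_⟩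
  obtain ⟨M', hM', hJM'⟩ := exists_isMaximalColoring_superset hJ
  rw [huniq M' hM', hMk] at hJM'
  exact (subset_singleton_iff.mp hJM').resolve_left hJ.1.ne_empty
end

section
/- Let A₀, A₁, …, A_m be (n+1)×(n+1) (0,1)-matrices, each with zero permanent, such that for each 1 ≤ k ≤ m every zero entry of A_k is also a zero entry of A_{k−1} (so that every admissible coloring of A_k is an admissible coloring of A_{k−1}). Let C(A_k) denote the maximal canonical coloring of A_k, i.e., the intersection of all maximal admissible colorings of A_k. Then the union C(A₀) ∪ C(A₁) ∪ ⋯ ∪ C(A_m) is contained in some maximal admissible coloring of A₀. In particular, if A₀ has no zero row (for every i there is some j with the (i,j) entry of A₀ equal to 1), then C(A₀) ∪ C(A₁) ∪ ⋯ ∪ C(A_m) is a proper subset of {0,…,n}. -/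
/-- `x` belongs to the maximal canonical coloring of `A`, i.e. to the intersection of
all maximal admissible colorings of `A`. -/
def MemMaxCanonical {n : ℕ} (A : Fin (n + 1) → Fin (n + 1) → Prop)
    (x : Fin (n + 1)) : Prop :=
  ∀ J : Finset (Fin (n + 1)), IsMaximalColoring A J → x ∈ J

/-!
Admissible colorings only become more plentiful as zero entries are added, so an admissible
coloring of `A_{k+1}` is one of `A_k`. Starting from a maximal coloring `J_m` of `A_m` (which
exists by the Frobenius–König theorem), extend `J_{k+1}` to a maximal coloring `J_k` of `A_k`.
The chain `J_m ⊆ ⋯ ⊆ J_0` ends in a maximal coloring of `A_0` containing every `C(A_k)`, since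
`C(A_k) ⊆ J_k`. If `A_0` has no zero row, `{0, …, n}` itself is not admissible for `A_0`, so
`J_0` is proper.
-/

namespace IsAdmissible

variable {n : ℕ} {A B : Fin (n + 1) → Fin (n + 1) → Prop} {J : Finset (Fin (n + 1))}

theorem of_zeros_subset (hAB : ∀ i j, ¬ B i j → ¬ A i j) (hJ : IsAdmissible B J) :
    IsAdmissible A J :=
  let ⟨hJne, I, hIne, hcard, hzero⟩ := hJ
  ⟨hJne, I, hIne, hcard, fun i hi j hj => hAB i j (hzero i hi j hj)⟩

theorem exists_isMaximalColoring_superset (hJ : IsAdmissible A J) :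
    ∃ J', J ⊆ J' ∧ IsMaximalColoring A J' := by
  classical
  obtain ⟨J', hJ'mem, hmax⟩ :=
    (Finset.univ.filter fun J' => J ⊆ J' ∧ IsAdmissible A J').exists_max_image Finset.card
      ⟨J, by simp [hJ]⟩
  obtain ⟨hJJ', hJ'⟩ := (Finset.mem_filter.mp hJ'mem).2
  refine ⟨J', hJJ', hJ', fun J'' hJ'' hsub => ?_⟩
  exact (Finset.eq_of_subset_of_card_le hsub (hmax J'' (by simp [hJJ'.trans hsub, hJ'']))).symm

theorem exists_zero_row (h : IsAdmissible A Finset.univ) : ∃ i, ∀ j, ¬ A i j := by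
  obtain ⟨-, I, hIne, -, hzero⟩ := h
  obtain ⟨i, hi⟩ := hIne
  exact ⟨i, fun j => hzero i hi j (Finset.mem_univ j)⟩

end IsAdmissible

/-- One direction of the Frobenius–König theorem. -/
theorem exists_isAdmissible_of_forall_perm {n : ℕ} (A : Fin (n + 1) → Fin (n + 1) → Prop)
    (hperm : ∀ σ : Equiv.Perm (Fin (n + 1)), ∃ i, ¬ A i (σ i)) :
    ∃ J, IsAdmissible A J := by
  classical
  set nbhd : Fin (n + 1) → Finset (Fin (n + 1)) := fun i => Finset.univ.filter (A i)
  -- Hall's condition fails, since a matching would be a permutation along nonzero entries.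
  obtain ⟨I, hI⟩ : ∃ I : Finset (Fin (n + 1)), (I.biUnion nbhd).card < I.card := by
    by_contra! hHall
    obtain ⟨f, hf, hfA⟩ := (Finset.all_card_le_biUnion_card_iff_exists_injective nbhd).mp hHall
    obtain ⟨i, hi⟩ := hperm (Equiv.ofBijective f (Finite.injective_iff_bijective.mp hf))
    exact hi (by simpa [nbhd] using hfA i)
  have hIcard : I.card ≤ n + 1 := by simpa using Finset.card_le_univ I
  have hcompl : n + 2 - I.card ≤ (I.biUnion nbhd)ᶜ.card := by
    rw [Finset.card_compl, Fintype.card_fin]; omega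
  obtain ⟨J, hJsub, hJcard⟩ := Finset.exists_subset_card_eq hcompl
  refine ⟨J, Finset.card_pos.mp (by omega), I, Finset.card_pos.mp (by omega), by omega, ?_⟩
  intro i hi j hj hA
  exact Finset.mem_compl.mp (hJsub hj) (Finset.mem_biUnion.mpr ⟨i, hi, by simpa [nbhd] using hA⟩)

theorem exists_isMaximalColoring_forall_memMaxCanonical_of_le {n m : ℕ}
    (A : Fin (m + 1) → Fin (n + 1) → Fin (n + 1) → Prop)
    (hperm : ∀ σ : Equiv.Perm (Fin (n + 1)), ∃ i, ¬ A (Fin.last m) i (σ i))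
    (hmono : ∀ k : Fin m, ∀ i j, ¬ A k.succ i j → ¬ A k.castSucc i j) (k : Fin (m + 1)) :
    ∃ J, IsMaximalColoring (A k) J ∧ ∀ l, k ≤ l → ∀ x, MemMaxCanonical (A l) x → x ∈ J := by
  induction k using Fin.reverseInduction with
  | last =>
    obtain ⟨J₀, hJ₀⟩ := exists_isAdmissible_of_forall_perm _ hperm
    obtain ⟨J, -, hJ⟩ := hJ₀.exists_isMaximalColoring_superset
    refine ⟨J, hJ, fun l hl x hx => ?_⟩
    rw [Fin.last_le_iff.mp hl] at hx
    exact hx J hJ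
  | cast k ih =>
    obtain ⟨J, hJ, hJmem⟩ := ih
    obtain ⟨J', hJJ', hJ'⟩ :=
      (hJ.1.of_zeros_subset (hmono k)).exists_isMaximalColoring_superset
    refine ⟨J', hJ', fun l hl x hx => ?_⟩
    rcases hl.eq_or_lt with rfl | hlt
    · exact hx J' hJ'
    · exact hJJ' (hJmem l (Fin.castSucc_lt_iff_succ_le.mp hlt) x hx)

/-- Let `A₀, A₁, …, A_m` be `(n+1) × (n+1)` (0,1)-matrices, each with zero permanent,
such that for each `1 ≤ k ≤ m` every zero entry of `A_k` is also a zero entry of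
`A_{k-1}`. Then the union of the maximal canonical colorings `C(A₀) ∪ ⋯ ∪ C(A_m)` is
contained in some maximal admissible coloring of `A₀`. In particular, if `A₀` has no
zero row, this union is a proper subset of `{0, …, n}`. -/
theorem union_maxCanonical_subset_maximal {n m : ℕ}
    (A : Fin (m + 1) → Fin (n + 1) → Fin (n + 1) → Prop)
    (hperm : ∀ k : Fin (m + 1), ∀ σ : Equiv.Perm (Fin (n + 1)),
      ∃ i : Fin (n + 1), ¬ A k i (σ i))
    (hmono : ∀ k : Fin m, ∀ i j : Fin (n + 1), ¬ A k.succ i j → ¬ A k.castSucc i j) :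
    (∃ J : Finset (Fin (n + 1)), IsMaximalColoring (A 0) J ∧
      ∀ k : Fin (m + 1), ∀ x : Fin (n + 1), MemMaxCanonical (A k) x → x ∈ J) ∧
    ((∀ i : Fin (n + 1), ∃ j : Fin (n + 1), A 0 i j) →
      ∃ x : Fin (n + 1), ∀ k : Fin (m + 1), ¬ MemMaxCanonical (A k) x) := by
  obtain ⟨J, hJ, hJmem⟩ :=
    exists_isMaximalColoring_forall_memMaxCanonical_of_le A (hperm _) hmono 0
  refine ⟨⟨J, hJ, fun k => hJmem k (Fin.zero_le k)⟩, fun hrow => ?_⟩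
  obtain ⟨x, hx⟩ : ∃ x, x ∉ J := by
    by_contra! hall
    obtain ⟨i, hi⟩ := (Finset.eq_univ_iff_forall.mpr hall ▸ hJ.1).exists_zero_row
    obtain ⟨j, hj⟩ := hrow i
    exact hi j hj
  exact ⟨x, fun k hk => hx (hJmem k (Fin.zero_le k) x hk)⟩
end

section
/- Let P₀, …, P_n be polytopes in ℝⁿ (convex hulls of nonempty finite sets of points) such that the Minkowski sum P = P₀ + ⋯ + P_n has nonempty interior. For 0 ≤ i, j ≤ n, let M_{ij} ⊆ P_i be sets of points satisfying the compatibility condition: for every permutation ε of {0,…,n}, the Minkowski sum M_{ε(0)0} + M_{ε(1)1} + ⋯ + M_{ε(n)n} is contained in the interior of P. Then for every nonzero linear functional v on ℝⁿ, there is no permutation ε of {0,…,n} such that M_{ε(i)i} ∩ F(P_{ε(i)}, v) ≠ ∅ for all 0 ≤ i ≤ n. (Equivalently, the coloring matrix of v, whose (i,j) entry is 1 iff M_{ij} meets F(P_i, v), has zero permanent.) -/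
open Pointwise

/-- `faceOf K v` is the face `F(K, v) = {x ∈ K | ∀ y ∈ K, v x ≤ v y}` of `K` on which
the linear functional `v` attains its minimum over `K`. -/
def faceOf {n : ℕ} (K : Set (Fin n → ℝ)) (v : (Fin n → ℝ) →ₗ[ℝ] ℝ) :
    Set (Fin n → ℝ) :=
  {x ∈ K | ∀ y ∈ K, v x ≤ v y}

/-! Choosing `x i ∈ M (ε i) i ∩ F(P (ε i), v)`, the point `∑ i, x i` lies in the face
`F(P, v)` of the Minkowski sum, because `v` is additive. By compatibility it
also lies in the interior of `P`; but a linear functional with a local minimum at an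
interior point has zero derivative there, so `v = 0`. -/

section Face

variable {n : ℕ} {v : (Fin n → ℝ) →ₗ[ℝ] ℝ}

theorem sum_mem_faceOf_sum {ι : Type*} [Fintype ι] {K : ι → Set (Fin n → ℝ)}
    {x : ι → Fin n → ℝ} (hx : ∀ i, x i ∈ faceOf (K i) v) :
    ∑ i, x i ∈ faceOf (∑ i, K i) v := by
  refine ⟨(Set.mem_fintype_sum _ _).2 ⟨x, fun i => (hx i).1, rfl⟩, ?_⟩
  rintro _ hy
  obtain ⟨y, hyK, rfl⟩ := (Set.mem_fintype_sum _ _).1 hy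
  simp only [map_sum]
  exact Finset.sum_le_sum fun i _ => (hx i).2 (y i) (hyK i)

theorem eq_zero_of_mem_faceOf_of_mem_interior {K : Set (Fin n → ℝ)} {x : Fin n → ℝ}
    (hface : x ∈ faceOf K v) (hint : x ∈ interior K) : v = 0 := by
  have hmin : IsLocalMin v x :=
    IsMinOn.isLocalMin (fun y hy => hface.2 y hy) (mem_interior_iff_mem_nhds.1 hint)
  have hderiv := hmin.hasFDerivAt_eq_zero (LinearMap.toContinuousLinearMap v).hasFDerivAt
  exact LinearMap.ext fun y => by simpa using congrArg (· y) hderiv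

end Face

theorem coloring_matrix_zero_permanent_general {n : ℕ}
    (P : Fin (n + 1) → Set (Fin n → ℝ))
    (M : Fin (n + 1) → Fin (n + 1) → Set (Fin n → ℝ))
    (hcompat : ∀ ε : Equiv.Perm (Fin (n + 1)),
      ∑ i, M (ε i) i ⊆ interior (∑ i, P i))
    (v : (Fin n → ℝ) →ₗ[ℝ] ℝ) (hv : v ≠ 0) :
    ¬ ∃ ε : Equiv.Perm (Fin (n + 1)),
        ∀ i : Fin (n + 1), (M (ε i) i ∩ faceOf (P (ε i)) v).Nonempty := by
  rintro ⟨ε, h⟩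
  choose x hxM hxF using h
  have hface : ∑ i, x i ∈ faceOf (∑ i, P i) v := by
    simpa only [Equiv.sum_comp ε P] using sum_mem_faceOf_sum (K := fun i => P (ε i)) hxF
  have hint : ∑ i, x i ∈ interior (∑ i, P i) :=
    hcompat ε ((Set.mem_fintype_sum _ _).2 ⟨x, hxM, rfl⟩)
  exact hv (eq_zero_of_mem_faceOf_of_mem_interior hface hint)

/-- Let `P₀, …, P_n` be polytopes in `ℝⁿ` whose Minkowski sum `P` has nonempty
interior, and let `M i j ⊆ P i` satisfy the compatibility condition: for every
permutation `ε` of `{0, …, n}`, the Minkowski sum `∑ i, M (ε i) i` is contained in the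
interior of `P`. Then for every nonzero linear functional `v`, there is no permutation
`ε` with `M (ε i) i ∩ F(P (ε i), v) ≠ ∅` for all `i`; i.e. the coloring matrix of `v`
has zero permanent. -/
theorem coloring_matrix_zero_permanent {n : ℕ}
    (S : Fin (n + 1) → Finset (Fin n → ℝ)) (hS : ∀ i, (S i).Nonempty)
    (P : Fin (n + 1) → Set (Fin n → ℝ))
    (hP : ∀ i, P i = convexHull ℝ ((S i : Set (Fin n → ℝ))))
    (hint : (interior (∑ i, P i)).Nonempty)
    (M : Fin (n + 1) → Fin (n + 1) → Set (Fin n → ℝ))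
    (hM : ∀ i j, M i j ⊆ P i)
    (hcompat : ∀ ε : Equiv.Perm (Fin (n + 1)),
      ∑ i, M (ε i) i ⊆ interior (∑ i, P i))
    (v : (Fin n → ℝ) →ₗ[ℝ] ℝ) (hv : v ≠ 0) :
    ¬ ∃ ε : Equiv.Perm (Fin (n + 1)),
        ∀ i : Fin (n + 1), (M (ε i) i ∩ faceOf (P (ε i)) v).Nonempty :=
  coloring_matrix_zero_permanent_general P M hcompat v hv
end
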